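/- arXiv:1801.09369 — 2 statements merged into one kernel-verified Lean document; each statement's English description precedes it below -/
import Mathlib

section
/- Let κ be a regular uncountable cardinal. Suppose there exists a sequence ⟨f_δ : δ < κ⁺⟩ of functions in κ^κ such that for every g ∈ κ^κ there is δ < κ⁺ with {α < κ : g(α) < f_δ(α)} stationary in κ. Then there is a maximal almost disjoint family in [κ]^κ of cardinality κ⁺, hence a(κ) = κ⁺. -/
open Cardinal Set

/-- `A` is a subset of `κ` (identified with `Iio κ.ord`) of full cardinality `κ`,
i.e. `A ∈ [κ]^κ`. -/
def IsBig (κ : Cardinal.{0}) (A : Set Ordinal) : Prop :=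
  A ⊆ Set.Iio κ.ord ∧ #A = Cardinal.lift.{1} κ

/-- `f` represents a function in `κ^κ`. -/
def FunOn (κ : Cardinal.{0}) (f : Ordinal → Ordinal) : Prop :=
  ∀ o < κ.ord, f o < κ.ord

/-- `f ≤* g` : the set of `α < κ` with `g α < f α` has cardinality `< κ`. -/
def LeStar (κ : Cardinal.{0}) (f g : Ordinal → Ordinal) : Prop :=
  #({α : Ordinal | α < κ.ord ∧ g α < f α} : Set Ordinal) < Cardinal.lift.{1} κ

/-- `F ⊆ κ^κ` is `*`-unbounded. -/
def UnboundedFam (κ : Cardinal.{0}) (F : Set (Ordinal → Ordinal)) : Prop :=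
  (∀ f ∈ F, FunOn κ f) ∧ ¬ ∃ g, FunOn κ g ∧ ∀ f ∈ F, LeStar κ f g

/-- `F ⊆ κ^κ` is `*`-dominating. -/
def DominatingFam (κ : Cardinal.{0}) (F : Set (Ordinal → Ordinal)) : Prop :=
  (∀ f ∈ F, FunOn κ f) ∧ ∀ g, FunOn κ g → ∃ f ∈ F, LeStar κ g f

/-- The bounding number `𝔟(κ)`. -/
noncomputable def boundingNum (κ : Cardinal.{0}) : Cardinal.{1} :=
  sInf { c | ∃ F : Set (Ordinal → Ordinal), UnboundedFam κ F ∧ #F = c }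

/-- The dominating number `𝔡(κ)`. -/
noncomputable def dominatingNum (κ : Cardinal.{0}) : Cardinal.{1} :=
  sInf { c | ∃ F : Set (Ordinal → Ordinal), DominatingFam κ F ∧ #F = c }

/-- `B` reaps the family `F ⊆ [κ]^κ`. -/
def Reaps (κ : Cardinal.{0}) (B : Set Ordinal) (F : Set (Set Ordinal)) : Prop :=
  B ⊆ Set.Iio κ.ord ∧ ∀ A ∈ F,
    #(A ∩ B : Set Ordinal) = Cardinal.lift.{1} κ ∧
    #(A ∩ (Set.Iio κ.ord \ B) : Set Ordinal) = Cardinal.lift.{1} κ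

/-- `F ⊆ [κ]^κ` is an unreaped family. -/
def UnreapedFam (κ : Cardinal.{0}) (F : Set (Set Ordinal)) : Prop :=
  (∀ A ∈ F, IsBig κ A) ∧ ¬ ∃ B, Reaps κ B F

/-- The reaping number `𝔯(κ)`. -/
noncomputable def reapingNum (κ : Cardinal.{0}) : Cardinal.{1} :=
  sInf { c | ∃ F : Set (Set Ordinal), UnreapedFam κ F ∧ #F = c }

/-- `A` and `B` are almost disjoint: `|A ∩ B| < κ`. -/
def AlmostDisjoint (κ : Cardinal.{0}) (A B : Set Ordinal) : Prop :=
  #(A ∩ B : Set Ordinal) < Cardinal.lift.{1} κ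

/-- `𝒜 ⊆ [κ]^κ` is an almost disjoint family. -/
def ADFamily (κ : Cardinal.{0}) (𝒜 : Set (Set Ordinal)) : Prop :=
  (∀ A ∈ 𝒜, IsBig κ A) ∧ ∀ A ∈ 𝒜, ∀ B ∈ 𝒜, A ≠ B → AlmostDisjoint κ A B

/-- `𝒜 ⊆ [κ]^κ` is a maximal almost disjoint family. -/
def MADFamily (κ : Cardinal.{0}) (𝒜 : Set (Set Ordinal)) : Prop :=
  ADFamily κ 𝒜 ∧ Cardinal.lift.{1} κ ≤ #𝒜 ∧
    ∀ B, IsBig κ B → ∃ A ∈ 𝒜, ¬ AlmostDisjoint κ A B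

/-- The almost disjointness number `𝔞(κ)`. -/
noncomputable def adNum (κ : Cardinal.{0}) : Cardinal.{1} :=
  sInf { c | ∃ 𝒜 : Set (Set Ordinal), MADFamily κ 𝒜 ∧ #𝒜 = c }

/-- `E` is a club (closed unbounded set) in the ordinal `o`. -/
def IsClubIn (E : Set Ordinal) (o : Ordinal) : Prop :=
  E ⊆ Set.Iio o ∧ (∀ x < o, ∃ e ∈ E, x ≤ e) ∧
    ∀ x < o, x ≠ 0 → sSup (E ∩ Set.Iio x) = x → x ∈ E

/-- `S` is stationary in the ordinal `o`. -/
def IsStationaryIn (S : Set Ordinal) (o : Ordinal) : Prop :=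
  S ⊆ Set.Iio o ∧ ∀ E, IsClubIn E o → (S ∩ E).Nonempty

/-- `s_A(α) = min (A \ (α+1))`, the least element of `A` above `α`. -/
noncomputable def succIn (A : Set Ordinal) (α : Ordinal) : Ordinal :=
  sInf {β | β ∈ A ∧ α < β}

/-- `set(E₁, ξ) = [ξ, s_{E₁}(ξ))`. -/
def blockSet (E₁ : Set Ordinal) (ξ : Ordinal) : Set Ordinal :=
  {ζ | ξ ≤ ζ ∧ ζ < succIn E₁ ξ}

/-- `set(E₂, E₁) = ⋃_{ξ ∈ E₂} set(E₁, ξ)`. -/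
def setSet (E₂ E₁ : Set Ordinal) : Set Ordinal :=
  ⋃ ξ ∈ E₂, blockSet E₁ ξ

/-- `A ⊆* B` mod `κ` : `|A \ B| < κ`. -/
def SubsetStar (κ : Cardinal.{0}) (A B : Set Ordinal) : Prop :=
  #(A \ B : Set Ordinal) < Cardinal.lift.{1} κ

/-- The weak power `λ^[κ]`. -/
noncomputable def weakPower (l k : Cardinal.{0}) : Cardinal.{1} :=
  sInf { c | ∃ P : Set (Set Ordinal),
    (∀ v ∈ P, v ⊆ Set.Iio l.ord ∧ #v ≤ Cardinal.lift.{1} k) ∧ #P = c ∧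
    ∀ u : Set Ordinal, u ⊆ Set.Iio l.ord → #u = Cardinal.lift.{1} k →
      ∃ P₀ ⊆ P, #P₀ < Cardinal.lift.{1} k ∧ u = ⋃₀ P₀ }

/-- Shelah's revised GCH, a theorem of ZFC. -/
def RevisedGCH : Prop :=
  ∀ θ lam : Cardinal.{0}, ℵ₀ < θ → θ.IsStrongLimit → θ ≤ lam →
    ∃ σ < θ, ∀ k, σ ≤ k → k < θ → weakPower lam k = Cardinal.lift.{1} lam

/-!
Given sets `X j ⊆ κ` (`j < κ`) such that no `⋃ j < i, X j` contains a tail of `κ`, and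
`g : κ → κ`, let `ξ` be continuous and increasing with `ξ (i + 1) > g (ξ i)`, and let
`A = ⋃ i < κ, [ξ i, ξ (i + 1)) \ ⋃ j < i, X j`. Then `A ∈ [κ]^κ` and `A ∩ X j ⊆ ξ (j + 1)`.
If `B ∈ [κ]^κ` is almost disjoint from every `X j` and `{α | succ_B α < g α}` is stationary, then
for unboundedly many `x` in that set `ξ x = x` and `B ∩ X j ⊆ x` for all `j < x`, so the least
element of `B` above `x` lies in the `x`-th block of `A`: `A` and `B` are not almost disjoint.

Take a partition of `κ` into sets `P l` of size `κ` and, by recursion on `δ < κ⁺`, let `A δ` be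
this set for `g = f δ` and `X j = P j ∪ A (e_δ j)`, where `e_δ` enumerates `δ` in length `κ`. The
family of all `P l` and `A δ` is almost disjoint, and a set `B` almost disjoint from all of them
contradicts the above for the `δ` given by the hypothesis. Applied to an enumeration of an almost
disjoint family of size `κ`, the same construction shows that such a family is never maximal.
-/

open Order Function

universe v

namespace Ordinal

noncomputable def supIter (u : Ordinal.{v} → Ordinal.{v} → Ordinal.{v}) (i : Ordinal.{v}) :
    Ordinal.{v} :=
  ⨆ j : Iio i, u j (supIter u j)
termination_by i
decreasing_by exact j.2

variable {u : Ordinal.{v} → Ordinal.{v} → Ordinal.{v}}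

theorem supIter_eq (u : Ordinal.{v} → Ordinal.{v} → Ordinal.{v}) (i : Ordinal.{v}) :
    supIter u i = ⨆ j : Iio i, u j (supIter u j) := by
  rw [supIter]

theorem le_supIter {i j : Ordinal.{v}} (hj : j < i) : u j (supIter u j) ≤ supIter u i := by
  rw [supIter_eq u i]
  exact Ordinal.le_iSup (fun j : Iio i => u j (supIter u j)) ⟨j, hj⟩

theorem supIter_le {i b : Ordinal.{v}} (h : ∀ j < i, u j (supIter u j) ≤ b) :
    supIter u i ≤ b := by
  rw [supIter_eq]
  exact Ordinal.iSup_le fun j => h j j.2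

section Inflationary

variable (hu : ∀ j x, x < u j x)
include hu

theorem supIter_strictMono : StrictMono (supIter u) :=
  fun _ _ hji => (hu _ _).trans_le (le_supIter hji)

theorem supIter_add_one (i : Ordinal.{v}) : supIter u (i + 1) = u i (supIter u i) := by
  refine le_antisymm (supIter_le fun j hj => ?_) (le_supIter (lt_add_one i))
  rcases (lt_add_one_iff.1 hj).eq_or_lt with rfl | hji
  · exact le_rfl
  · exact (le_supIter hji).trans (hu _ _).le

theorem supIter_eq_self {i : Ordinal.{v}} (h : ∀ j < i, supIter u (j + 1) ≤ i) :
    supIter u i = i :=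
  le_antisymm (supIter_le fun j hj => supIter_add_one hu j ▸ h j hj)
    (supIter_strictMono hu).le_apply

end Inflationary

theorem iSup_Iio_lt_ord {κ : Cardinal.{v}} (hreg : κ.IsRegular) {F : Ordinal.{v} → Ordinal.{v}}
    {a : Ordinal.{v}} (ha : a < κ.ord) (hF : ∀ j < a, F j < κ.ord) :
    ⨆ j : Iio a, F j < κ.ord := by
  refine lift_iSup_lt_of_lt_cof ?_ fun j => hF j j.2
  rw [Cardinal.mk_Iio_ordinal, Cardinal.lift_lift, ← lift_cof, hreg.cof_ord, Cardinal.lift_lt]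
  exact Cardinal.lt_ord.1 ha

theorem supIter_lt_ord {κ : Cardinal.{v}} (hreg : κ.IsRegular)
    (hu : ∀ j < κ.ord, ∀ x < κ.ord, u j x < κ.ord) {i : Ordinal.{v}} (hi : i < κ.ord) :
    supIter u i < κ.ord := by
  induction i using WellFoundedLT.induction with
  | ind i ih =>
    rw [supIter_eq]
    exact iSup_Iio_lt_ord hreg hi fun j hj => hu j (hj.trans hi) _ (ih j hj (hj.trans hi))

end Ordinal

theorem Cardinal.succ_lt_ord {κ : Cardinal.{v}} (hκ : ℵ₀ ≤ κ) {a : Ordinal.{v}} (ha : a < κ.ord) :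
    succ a < κ.ord :=
  (Cardinal.isSuccLimit_ord hκ).succ_lt ha

section Regular

variable {κ : Cardinal.{0}}

theorem mk_lt_of_subset_Iio {S : Set Ordinal} {β : Ordinal} (hβ : β < κ.ord) (hS : S ⊆ Iio β) :
    #S < Cardinal.lift.{1} κ :=
  calc #S ≤ #(Iio β) := mk_le_mk_of_subset hS
    _ = Cardinal.lift.{1} β.card := Cardinal.mk_Iio_ordinal β
    _ < Cardinal.lift.{1} κ := Cardinal.lift_lt.2 (Cardinal.lt_ord.1 hβ)

theorem mk_Iio_ord : #(Iio κ.ord) = Cardinal.lift.{1} κ := by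
  rw [Cardinal.mk_Iio_ordinal, Cardinal.card_ord]

theorem Cardinal.IsRegular.sSup_lt_ord (hreg : κ.IsRegular) {S : Set Ordinal}
    (hS : S ⊆ Iio κ.ord) (h : #S < Cardinal.lift.{1} κ) : sSup S < κ.ord :=
  Ordinal.sSup_lt_of_lt_cof (by rwa [← Ordinal.lift_cof, hreg.cof_ord]) hS

theorem Cardinal.IsRegular.mk_lt_iff (hreg : κ.IsRegular) {S : Set Ordinal}
    (hS : S ⊆ Iio κ.ord) : #S < Cardinal.lift.{1} κ ↔ ∃ β < κ.ord, S ⊆ Iio β := by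
  refine ⟨fun h => ⟨_, Cardinal.succ_lt_ord hreg.aleph0_le (hreg.sSup_lt_ord hS h),
    fun s hs => lt_succ_iff.2 (le_csSup ⟨κ.ord, fun t ht => (hS ht).le⟩ hs)⟩, ?_⟩
  rintro ⟨β, hβ, hSβ⟩
  exact mk_lt_of_subset_Iio hβ hSβ

theorem Cardinal.IsRegular.mk_eq_iff (hreg : κ.IsRegular) {S : Set Ordinal}
    (hS : S ⊆ Iio κ.ord) : #S = Cardinal.lift.{1} κ ↔ ∀ x < κ.ord, ∃ s ∈ S, x < s := by
  have hle : #S ≤ Cardinal.lift.{1} κ := mk_Iio_ord (κ := κ) ▸ mk_le_mk_of_subset hS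
  rw [← hle.not_lt_iff_eq, hreg.mk_lt_iff hS]
  constructor
  · intro h x hx
    by_contra! hSx
    exact h ⟨succ x, Cardinal.succ_lt_ord hreg.aleph0_le hx,
      fun s hs => lt_succ_iff.2 (hSx s hs)⟩
  · rintro h ⟨β, hβ, hSβ⟩
    obtain ⟨s, hs, hβs⟩ := h β hβ
    exact (hSβ hs).not_gt hβs

end Regular

section AlmostDisjoint

variable {κ : Cardinal.{0}}

theorem isBig_iff (hreg : κ.IsRegular) {A : Set Ordinal} :
    IsBig κ A ↔ A ⊆ Iio κ.ord ∧ ∀ x < κ.ord, ∃ a ∈ A, x < a :=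
  and_congr_right hreg.mk_eq_iff

theorem AlmostDisjoint.symm {A B : Set Ordinal} (h : AlmostDisjoint κ A B) :
    AlmostDisjoint κ B A := by
  rwa [AlmostDisjoint, inter_comm]

theorem AlmostDisjoint.mono_right {A B C : Set Ordinal} (h : AlmostDisjoint κ A B) (hCB : C ⊆ B) :
    AlmostDisjoint κ A C :=
  (mk_le_mk_of_subset (inter_subset_inter_right A hCB)).trans_lt h

theorem AlmostDisjoint.union_right (hκ : ℵ₀ ≤ κ) {A B C : Set Ordinal}
    (hB : AlmostDisjoint κ A B) (hC : AlmostDisjoint κ A C) : AlmostDisjoint κ A (B ∪ C) := by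
  rw [AlmostDisjoint, inter_union_distrib_left]
  exact (mk_union_le _ _).trans_lt (add_lt_of_lt (Cardinal.aleph0_le_lift.2 hκ) hB hC)

theorem Disjoint.almostDisjoint (hκ : ℵ₀ ≤ κ) {A B : Set Ordinal} (h : Disjoint A B) :
    AlmostDisjoint κ A B := by
  simpa [AlmostDisjoint, h.inter_eq] using Cardinal.aleph0_pos.trans_le hκ

theorem almostDisjoint_biUnion (hreg : κ.IsRegular) {A : Set Ordinal} {X : Ordinal → Set Ordinal}
    {i : Ordinal} (hi : i < κ.ord) (h : ∀ j < i, AlmostDisjoint κ A (X j)) :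
    AlmostDisjoint κ A (⋃ j < i, X j) := by
  rw [AlmostDisjoint, inter_iUnion₂]
  refine (card_biUnion_lt_iff_forall_of_isRegular (s := Iio i) hreg.lift ?_).2 h
  exact mk_lt_of_subset_Iio hi subset_rfl

theorem IsBig.not_almostDisjoint_self {A : Set Ordinal} (h : IsBig κ A) :
    ¬ AlmostDisjoint κ A A := by
  rw [AlmostDisjoint, inter_self, h.2]
  exact lt_irrefl _

theorem IsBig.diff (hreg : κ.IsRegular) {A B : Set Ordinal} (hA : IsBig κ A)
    (hAB : AlmostDisjoint κ A B) : IsBig κ (A \ B) := by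
  refine ⟨sdiff_subset.trans hA.1, le_antisymm ((mk_le_mk_of_subset sdiff_subset).trans hA.2.le) ?_⟩
  by_contra! h
  have := calc Cardinal.lift.{1} κ = #A := hA.2.symm
    _ ≤ #(A ∩ B : Set Ordinal) + #(A \ B : Set Ordinal) := by
      rw [← mk_union_of_disjoint (disjoint_sdiff_inter.symm), inter_union_sdiff]
    _ < Cardinal.lift.{1} κ := add_lt_of_lt (Cardinal.aleph0_le_lift.2 hreg.aleph0_le) hAB h
  exact this.false

end AlmostDisjoint

theorem isClubIn_closurePoints {κ : Cardinal.{0}} (hreg : κ.IsRegular) (hunc : ℵ₀ < κ)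
    {F : Ordinal → Ordinal} (hF : ∀ j < κ.ord, F j < κ.ord) {y : Ordinal} (hy : y < κ.ord) :
    IsClubIn {x | x < κ.ord ∧ y < x ∧ ∀ j < x, F j < x} κ.ord := by
  refine ⟨fun x hx => hx.1, fun z hz => ?_, fun x hx hx0 hsup => ?_⟩
  · set G : Ordinal → Ordinal := fun a => succ (max a (⨆ j : Iio a, F j))
    have hG : ∀ a < κ.ord, G a < κ.ord := fun a ha =>
      Cardinal.succ_lt_ord hreg.aleph0_le
        (max_lt ha (Ordinal.iSup_Iio_lt_ord hreg ha fun j hj => hF j (hj.trans ha)))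
    have hyz : max y z < Ordinal.nfp G (max y z) :=
      (lt_succ_of_le (le_max_left _ _)).trans_le (Ordinal.iterate_le_nfp G _ 1)
    refine ⟨_, ⟨Ordinal.nfp_lt_ord (by rwa [hreg.cof_ord]) hG (max_lt hy hz),
      (le_max_left y z).trans_lt hyz, fun j hj => ?_⟩, (le_max_right y z).trans hyz.le⟩
    obtain ⟨n, hn⟩ := Ordinal.lt_nfp_iff.1 hj
    calc F j ≤ ⨆ j : Iio (G^[n] (max y z)), F j := Ordinal.le_iSup (fun j : Iio _ => F j) ⟨j, hn⟩
      _ < G^[n + 1] (max y z) := by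
        rw [Function.iterate_succ_apply']
        exact lt_succ_of_le (le_max_right _ _)
      _ ≤ _ := Ordinal.iterate_le_nfp G _ _
  · have hne : ({x | x < κ.ord ∧ y < x ∧ ∀ j < x, F j < x} ∩ Iio x).Nonempty := by
      by_contra h
      rw [not_nonempty_iff_eq_empty.1 h, csSup_empty] at hsup
      exact hx0 hsup.symm
    refine ⟨hx, ?_, fun j hj => ?_⟩
    · obtain ⟨e, ⟨-, hye, -⟩, hex⟩ := hne
      exact hye.trans hex
    · rw [← hsup] at hj
      obtain ⟨e, ⟨⟨-, -, he⟩, hex⟩, hje⟩ := exists_lt_of_lt_csSup hne hj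
      exact (he j hje).trans hex

theorem succIn_mem {B : Set Ordinal} {α : Ordinal} (h : ∃ b ∈ B, α < b) :
    succIn B α ∈ B ∧ α < succIn B α :=
  csInf_mem h

section CatchSet

variable {κ : Cardinal.{0}} {X : Ordinal → Set Ordinal} {g : Ordinal → Ordinal}

noncomputable def nextFree (X : Ordinal → Set Ordinal) (i m : Ordinal) : Ordinal :=
  sInf {α | m < α ∧ α ∉ ⋃ j < i, X j}

-- The `max x _` keeps the step inflationary even where `nextFree` is the junk value `sInf ∅ = 0`.
noncomputable def catchStep (X : Ordinal → Set Ordinal) (g : Ordinal → Ordinal) (i x : Ordinal) :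
    Ordinal :=
  succ (max x (nextFree X i (max x (g x))))

noncomputable def catchSeq (X : Ordinal → Set Ordinal) (g : Ordinal → Ordinal) :
    Ordinal → Ordinal :=
  Ordinal.supIter (catchStep X g)

noncomputable def catchSet (κ : Cardinal.{0}) (X : Ordinal → Set Ordinal)
    (g : Ordinal → Ordinal) : Set Ordinal :=
  ⋃ i < κ.ord, Ico (catchSeq X g i) (catchSeq X g (i + 1)) \ ⋃ j < i, X j

theorem lt_catchStep (i x : Ordinal) : x < catchStep X g i x :=
  lt_succ_of_le (le_max_left _ _)

theorem catchSeq_strictMono : StrictMono (catchSeq X g) :=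
  Ordinal.supIter_strictMono lt_catchStep

theorem catchSeq_eq_self {i : Ordinal} (h : ∀ j < i, catchSeq X g (j + 1) ≤ i) :
    catchSeq X g i = i :=
  Ordinal.supIter_eq_self lt_catchStep h

theorem nextFree_lt_catchSeq_add_one (i : Ordinal) :
    nextFree X i (max (catchSeq X g i) (g (catchSeq X g i))) < catchSeq X g (i + 1) := by
  rw [catchSeq, Ordinal.supIter_add_one lt_catchStep]
  exact lt_succ_of_le (le_max_right _ _)

theorem mem_catchSet {α : Ordinal} : α ∈ catchSet κ X g ↔ ∃ i < κ.ord,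
    (catchSeq X g i ≤ α ∧ α < catchSeq X g (i + 1)) ∧ α ∉ ⋃ j < i, X j := by
  simp only [catchSet, mem_iUnion, mem_sdiff, mem_Ico, exists_prop]

variable (hfree : ∀ i < κ.ord, ∀ m < κ.ord, ∃ α < κ.ord, m < α ∧ α ∉ ⋃ j < i, X j)
include hfree

theorem nextFree_spec {i m : Ordinal} (hi : i < κ.ord) (hm : m < κ.ord) :
    m < nextFree X i m ∧ nextFree X i m < κ.ord ∧ nextFree X i m ∉ ⋃ j < i, X j := by
  obtain ⟨α, hακ, hmα, hα⟩ := hfree i hi m hm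
  have hne : Set.Nonempty {α | m < α ∧ α ∉ ⋃ j < i, X j} := ⟨α, hmα, hα⟩
  have hmem := csInf_mem hne
  have hle : nextFree X i m ≤ α := csInf_le' ⟨hmα, hα⟩
  exact ⟨hmem.1, hle.trans_lt hακ, hmem.2⟩

variable (hreg : κ.IsRegular) (hg : FunOn κ g)
include hreg hg

theorem catchSeq_lt_ord {i : Ordinal} (hi : i < κ.ord) : catchSeq X g i < κ.ord :=
  Ordinal.supIter_lt_ord hreg (fun _ hj x hx => Cardinal.succ_lt_ord hreg.aleph0_le
    (max_lt hx (nextFree_spec hfree hj (max_lt hx (hg x hx))).2.1)) hi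

theorem mem_catchSet_of_le {i α : Ordinal} (hi : i < κ.ord) (hξα : catchSeq X g i ≤ α)
    (hαg : α ≤ max (catchSeq X g i) (g (catchSeq X g i))) (hα : α ∉ ⋃ j < i, X j) :
    α ∈ catchSet κ X g := by
  have hξ := catchSeq_lt_ord hfree hreg hg hi
  refine mem_catchSet.2 ⟨i, hi, ⟨hξα, ?_⟩, hα⟩
  exact hαg.trans_lt ((nextFree_spec hfree hi (max_lt hξ (hg _ hξ))).1.trans
    (nextFree_lt_catchSeq_add_one i))

theorem isBig_catchSet : IsBig κ (catchSet κ X g) := by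
  refine (isBig_iff hreg).2 ⟨fun α hα => ?_, fun x hx => ?_⟩
  · obtain ⟨i, hi, ⟨-, hα⟩, -⟩ := mem_catchSet.1 hα
    exact hα.trans (catchSeq_lt_ord hfree hreg hg
      (Cardinal.succ_lt_ord hreg.aleph0_le hi))
  · have hξ := catchSeq_lt_ord hfree hreg hg hx
    obtain ⟨hlt, -, hfr⟩ := nextFree_spec hfree hx (max_lt hξ (hg _ hξ))
    refine ⟨_, mem_catchSet.2 ⟨x, hx, ⟨(le_max_left _ _).trans hlt.le,
      nextFree_lt_catchSeq_add_one x⟩, hfr⟩, ?_⟩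
    exact catchSeq_strictMono.le_apply.trans_lt ((le_max_left _ _).trans_lt hlt)

theorem almostDisjoint_catchSet {j : Ordinal} (hj : j < κ.ord) :
    AlmostDisjoint κ (catchSet κ X g) (X j) := by
  have hj1 := Cardinal.succ_lt_ord hreg.aleph0_le hj
  refine mk_lt_of_subset_Iio (catchSeq_lt_ord hfree hreg hg hj1) fun α ⟨hα, hαX⟩ => ?_
  obtain ⟨i, -, ⟨-, hαi⟩, hfr⟩ := mem_catchSet.1 hα
  have hij : i ≤ j := not_lt.1 fun hji => hfr (mem_biUnion hji hαX)
  exact hαi.trans_le (catchSeq_strictMono.monotone (add_le_add_left hij 1))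

theorem not_almostDisjoint_catchSet (hunc : ℵ₀ < κ) {B : Set Ordinal} (hB : IsBig κ B)
    (hBX : ∀ j < κ.ord, AlmostDisjoint κ B (X j))
    (hstat : IsStationaryIn {α | α < κ.ord ∧ succIn B α < g α} κ.ord) :
    ¬ AlmostDisjoint κ (catchSet κ X g) B := by
  have hB' := (isBig_iff hreg).1 hB
  have hsup : ∀ j < κ.ord, sSup (B ∩ X j) < κ.ord := fun j hj =>
    hreg.sSup_lt_ord (inter_subset_left.trans hB.1) (hBX j hj)
  have hle_sup : ∀ j, ∀ b ∈ B ∩ X j, b ≤ sSup (B ∩ X j) := fun j b hb =>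
    le_csSup ⟨κ.ord, fun c hc => (hB.1 hc.1).le⟩ hb
  suffices h : ∀ y < κ.ord, ∃ b ∈ catchSet κ X g ∩ B, y < b by
    have hsub : catchSet κ X g ∩ B ⊆ Iio κ.ord :=
      inter_subset_left.trans (isBig_catchSet hfree hreg hg).1
    rw [AlmostDisjoint, (hreg.mk_eq_iff hsub).2 h]
    exact lt_irrefl _
  intro y hy
  obtain ⟨x, ⟨-, hbg⟩, hxκ, hyx, hx⟩ := hstat.2 _ (isClubIn_closurePoints hreg hunc
    (F := fun j => max (sSup (B ∩ X j)) (catchSeq X g (j + 1))) (fun j hj => max_lt (hsup j hj)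
      (catchSeq_lt_ord hfree hreg hg (Cardinal.succ_lt_ord hreg.aleph0_le hj))) hy)
  have hξx : catchSeq X g x = x :=
    catchSeq_eq_self fun j hj => (le_max_right _ _).trans (hx j hj).le
  obtain ⟨hbB, hxb⟩ := succIn_mem (hB'.2 x hxκ)
  refine ⟨succIn B x, ⟨mem_catchSet_of_le hfree hreg hg hxκ ?_ ?_ ?_, hbB⟩, hyx.trans hxb⟩
  · rw [hξx]
    exact hxb.le
  · rw [hξx]
    exact hbg.le.trans (le_max_right _ _)
  · simp only [mem_iUnion, exists_prop, not_exists, not_and]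
    intro j hj hbX
    exact hxb.not_gt ((hle_sup j _ ⟨hbB, hbX⟩).trans_lt ((le_max_left _ _).trans_lt (hx j hj)))

end CatchSet

section MAD

variable {κ : Cardinal.{0}}

theorem funOn_succIn (hreg : κ.IsRegular) {B : Set Ordinal} (hB : IsBig κ B) :
    FunOn κ (succIn B) :=
  fun α hα => hB.1 (succIn_mem (((isBig_iff hreg).1 hB).2 α hα)).1

theorem exists_lt_notMem_biUnion (hreg : κ.IsRegular) {Y : Set Ordinal} (hY : IsBig κ Y)
    {X : Ordinal → Set Ordinal} {i : Ordinal} (hi : i < κ.ord)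
    (h : ∀ j < i, AlmostDisjoint κ Y (X j)) :
    ∀ m < κ.ord, ∃ α < κ.ord, m < α ∧ α ∉ ⋃ j < i, X j := by
  intro m hm
  obtain ⟨α, ⟨hαY, hαX⟩, hmα⟩ :=
    ((isBig_iff hreg).1 (hY.diff hreg (almostDisjoint_biUnion hreg hi h))).2 m hm
  exact ⟨α, hY.1 hαY, hmα, hαX⟩

theorem ADFamily.exists_isBig_forall_almostDisjoint (hreg : κ.IsRegular) {𝒜 : Set (Set Ordinal)}
    (h𝒜 : ADFamily κ 𝒜) (hcard : #𝒜 = Cardinal.lift.{1} κ) :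
    ∃ B, IsBig κ B ∧ ∀ A ∈ 𝒜, AlmostDisjoint κ A B := by
  classical
  obtain ⟨e⟩ := Cardinal.eq.1 (mk_Iio_ord.trans hcard.symm)
  set X : Ordinal → Set Ordinal := fun i => if h : i < κ.ord then e ⟨i, h⟩ else ∅
  have hX : ∀ i (hi : i < κ.ord), X i = e ⟨i, hi⟩ := fun i hi => dif_pos hi
  have hfree : ∀ i < κ.ord, ∀ m < κ.ord, ∃ α < κ.ord, m < α ∧ α ∉ ⋃ j < i, X j := by
    intro i hi
    refine exists_lt_notMem_biUnion hreg (hX i hi ▸ h𝒜.1 _ (e _).2) hi fun j hj => ?_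
    rw [hX i hi, hX j (hj.trans hi)]
    refine h𝒜.2 _ (e _).2 _ (e _).2 fun heq => hj.ne' ?_
    exact congrArg Subtype.val (e.injective (Subtype.ext heq))
  have hg : FunOn κ fun _ => 0 := fun _ _ => hreg.ord_pos
  refine ⟨catchSet κ X fun _ => 0, isBig_catchSet hfree hreg hg, fun A hA => ?_⟩
  obtain ⟨⟨i, hi⟩, hiA⟩ := e.surjective ⟨A, hA⟩
  have hXA : X i = A := (hX i hi).trans (congrArg Subtype.val hiA)
  rw [← hXA]
  exact (almostDisjoint_catchSet hfree hreg hg hi).symm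

theorem MADFamily.lift_succ_le_mk (hreg : κ.IsRegular) {𝒜 : Set (Set Ordinal)}
    (h𝒜 : MADFamily κ 𝒜) : Cardinal.lift.{1} (succ κ) ≤ #𝒜 := by
  rw [Cardinal.lift_succ]
  refine succ_le_of_lt (h𝒜.2.1.lt_of_ne fun hcard => ?_)
  obtain ⟨B, hB, hAB⟩ := h𝒜.1.exists_isBig_forall_almostDisjoint hreg hcard.symm
  obtain ⟨A, hA, hAB'⟩ := h𝒜.2.2 B hB
  exact hAB' (hAB A hA)

theorem adNum_eq_lift_succ (hreg : κ.IsRegular)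
    (h : ∃ 𝒜 : Set (Set Ordinal), MADFamily κ 𝒜 ∧ #𝒜 = Cardinal.lift.{1} (succ κ)) :
    adNum κ = Cardinal.lift.{1} (succ κ) :=
  le_antisymm (csInf_le' h) (le_csInf ⟨_, h⟩ fun _ ⟨_, h𝒜, hc⟩ => hc ▸ h𝒜.lift_succ_le_mk hreg)

theorem exists_pairwise_disjoint_isBig (hκ : ℵ₀ ≤ κ) :
    ∃ P : Ordinal → Set Ordinal, Pairwise (Disjoint on P) ∧ ∀ l < κ.ord, IsBig κ (P l) := by
  obtain ⟨e⟩ := Cardinal.eq.1 (show #(Iio κ.ord × Iio κ.ord) = #(Iio κ.ord) by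
    rw [mk_prod, Cardinal.lift_id, mk_Iio_ord, mul_eq_self (Cardinal.aleph0_le_lift.2 hκ)])
  have he : Function.Injective fun p => (e p : Ordinal) := Subtype.val_injective.comp e.injective
  refine ⟨fun l => (fun p => (e p : Ordinal)) '' {p | (p.1 : Ordinal) = l}, fun l l' hll' => ?_,
    fun l hl => ⟨?_, ?_⟩⟩
  · exact (disjoint_image_iff he).2 (Set.disjoint_left.2 fun p h h' => hll' (h.symm.trans h'))
  · rintro _ ⟨p, -, rfl⟩
    exact (e p).2
  · rw [mk_image_eq he, ← mk_Iio_ord]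
    exact Cardinal.mk_congr
      { toFun := fun p => p.1.2
        invFun := fun y => ⟨(⟨l, hl⟩, y), rfl⟩
        left_inv := by
          rintro ⟨⟨⟨a, ha⟩, y⟩, h⟩
          obtain rfl : a = l := h
          rfl
        right_inv := fun _ => rfl }

theorem exists_forall_surjOn_Iio (κ : Cardinal.{0}) :
    ∃ E : Ordinal → Ordinal → Ordinal, ∀ δ < (succ κ).ord, SurjOn (E δ) (Iio κ.ord) (Iio δ) := by
  classical
  have h : ∀ δ, ∃ e : Ordinal → Ordinal, δ < (succ κ).ord → SurjOn e (Iio κ.ord) (Iio δ) := by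
    intro δ
    by_cases hδ : δ < (succ κ).ord
    · have hle : #(Iio δ) ≤ #(Iio κ.ord) := by
        rw [Cardinal.mk_Iio_ordinal, mk_Iio_ord, Cardinal.lift_le]
        exact Cardinal.card_le_iff.2 hδ
      obtain ⟨ι⟩ := hle
      let g : Ordinal → Ordinal := fun γ => if h : γ < δ then ι ⟨γ, h⟩ else 0
      have hg : ∀ γ (hγ : γ < δ), g γ = ι ⟨γ, hγ⟩ := fun γ hγ => dif_pos hγ
      have hinj : InjOn g (Iio δ) := fun a ha b hb hab => by
        rw [hg a ha, hg b hb] at hab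
        exact congrArg Subtype.val (ι.injective (Subtype.ext hab))
      exact ⟨invFunOn g (Iio δ), fun _ => hinj.leftInvOn_invFunOn.surjOn
        fun γ hγ => (hg γ hγ ▸ (ι ⟨γ, hγ⟩).2 : g γ < κ.ord)⟩
    · exact ⟨id, fun h => absurd h hδ⟩
  choose E hE using h
  exact ⟨E, hE⟩

end MAD

section Construction

variable {κ : Cardinal.{0}} {P : Ordinal → Set Ordinal} {E f : Ordinal → Ordinal → Ordinal}

noncomputable def madSeq (κ : Cardinal.{0}) (P : Ordinal → Set Ordinal)
    (E f : Ordinal → Ordinal → Ordinal) (δ : Ordinal) : Set Ordinal :=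
  catchSet κ (fun j => P j ∪ ⋃ (_ : E δ j < δ), madSeq κ P E f (E δ j)) (f δ)
termination_by δ

def madAvoid (κ : Cardinal.{0}) (P : Ordinal → Set Ordinal) (E f : Ordinal → Ordinal → Ordinal)
    (δ j : Ordinal) : Set Ordinal :=
  P j ∪ ⋃ (_ : E δ j < δ), madSeq κ P E f (E δ j)

theorem madSeq_eq (δ : Ordinal) : madSeq κ P E f δ = catchSet κ (madAvoid κ P E f δ) (f δ) := by
  rw [madSeq]
  rfl

theorem almostDisjoint_madAvoid (hκ : ℵ₀ ≤ κ) {B : Set Ordinal} {δ j : Ordinal}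
    (hBP : AlmostDisjoint κ B (P j)) (hBA : ∀ γ < δ, AlmostDisjoint κ B (madSeq κ P E f γ)) :
    AlmostDisjoint κ B (madAvoid κ P E f δ j) := by
  refine hBP.union_right hκ ?_
  by_cases h : E δ j < δ
  · simpa [h] using hBA _ h
  · simpa [h] using (disjoint_empty B).almostDisjoint hκ

theorem exists_lt_notMem_madAvoid (hreg : κ.IsRegular) (hP : Pairwise (Disjoint on P))
    (hPbig : ∀ l < κ.ord, IsBig κ (P l)) {δ : Ordinal}
    (hA : ∀ γ < δ, ∀ l < κ.ord, AlmostDisjoint κ (madSeq κ P E f γ) (P l)) :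
    ∀ i < κ.ord, ∀ m < κ.ord, ∃ α < κ.ord, m < α ∧ α ∉ ⋃ j < i, madAvoid κ P E f δ j :=
  fun i hi => exists_lt_notMem_biUnion hreg (hPbig i hi) hi fun _ hj =>
    almostDisjoint_madAvoid hreg.aleph0_le ((hP hj.ne').almostDisjoint hreg.aleph0_le)
      fun γ hγ => (hA γ hγ i hi).symm

def madFamily (κ : Cardinal.{0}) (P : Ordinal → Set Ordinal) (E f : Ordinal → Ordinal → Ordinal) :
    Set (Set Ordinal) :=
  P '' Iio κ.ord ∪ madSeq κ P E f '' Iio (succ κ).ord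

variable (hreg : κ.IsRegular) (hP : Pairwise (Disjoint on P))
  (hPbig : ∀ l < κ.ord, IsBig κ (P l)) (hE : ∀ δ < (succ κ).ord, SurjOn (E δ) (Iio κ.ord) (Iio δ))
  (hf : ∀ δ < (succ κ).ord, FunOn κ (f δ))
include hreg hP hPbig hE hf

theorem madSeq_spec {δ : Ordinal} (hδ : δ < (succ κ).ord) :
    IsBig κ (madSeq κ P E f δ) ∧ (∀ l < κ.ord, AlmostDisjoint κ (madSeq κ P E f δ) (P l)) ∧
      ∀ γ < δ, AlmostDisjoint κ (madSeq κ P E f δ) (madSeq κ P E f γ) := by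
  induction δ using WellFoundedLT.induction with
  | ind δ ih =>
    have hfree := exists_lt_notMem_madAvoid hreg hP hPbig fun γ hγ => (ih γ hγ (hγ.trans hδ)).2.1
    rw [madSeq_eq]
    refine ⟨isBig_catchSet hfree hreg (hf δ hδ), fun l hl => ?_, fun γ hγ => ?_⟩
    · exact (almostDisjoint_catchSet hfree hreg (hf δ hδ) hl).mono_right subset_union_left
    · obtain ⟨j, hj, rfl⟩ := hE δ hδ hγ
      refine (almostDisjoint_catchSet hfree hreg (hf δ hδ) hj).mono_right ?_
      exact subset_union_right.trans' (subset_iUnion (fun _ : E δ j < δ => _) hγ)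

theorem adFamily_madFamily : ADFamily κ (madFamily κ P E f) := by
  have hspec := fun δ (hδ : δ ∈ Iio (succ κ).ord) => madSeq_spec hreg hP hPbig hE hf hδ
  refine ⟨?_, ?_⟩
  · rintro _ (⟨l, hl, rfl⟩ | ⟨δ, hδ, rfl⟩)
    exacts [hPbig l hl, (hspec δ hδ).1]
  · rintro _ (⟨l, hl, rfl⟩ | ⟨δ, hδ, rfl⟩) _ (⟨l', hl', rfl⟩ | ⟨δ', hδ', rfl⟩) hne
    · exact (hP fun h : l = l' => hne (h ▸ rfl)).almostDisjoint hreg.aleph0_le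
    · exact ((hspec δ' hδ').2.1 l hl).symm
    · exact (hspec δ hδ).2.1 l' hl'
    · rcases lt_trichotomy δ δ' with h | rfl | h
      exacts [((hspec δ' hδ').2.2 δ h).symm, absurd rfl hne, (hspec δ hδ).2.2 δ' h]

theorem mk_madFamily : #(madFamily κ P E f) = Cardinal.lift.{1} (succ κ) := by
  have hinj : InjOn (madSeq κ P E f) (Iio (succ κ).ord) := by
    intro δ hδ δ' hδ' h
    by_contra hne
    rcases lt_or_gt_of_ne hne with h' | h'
    · exact (madSeq_spec hreg hP hPbig hE hf hδ').1.not_almostDisjoint_self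
        (h ▸ (madSeq_spec hreg hP hPbig hE hf hδ').2.2 δ h')
    · exact (madSeq_spec hreg hP hPbig hE hf hδ).1.not_almostDisjoint_self
        (h ▸ (madSeq_spec hreg hP hPbig hE hf hδ).2.2 δ' h')
  refine le_antisymm ((mk_union_le _ _).trans ?_) ?_
  · calc #(P '' Iio κ.ord) + #(madSeq κ P E f '' Iio (succ κ).ord)
        ≤ Cardinal.lift.{1} κ + Cardinal.lift.{1} (succ κ) :=
          add_le_add (mk_image_le.trans_eq mk_Iio_ord) (mk_image_le.trans_eq mk_Iio_ord)
      _ = Cardinal.lift.{1} (succ κ) := add_eq_right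
          (Cardinal.aleph0_le_lift.2 (hreg.aleph0_le.trans (le_succ κ)))
          (Cardinal.lift_le.2 (le_succ κ))
  · rw [← mk_Iio_ord, ← mk_image_eq_of_injOn _ _ hinj]
    exact mk_le_mk_of_subset subset_union_right

theorem madFamily_maximal (hunc : ℵ₀ < κ)
    (hstat : ∀ g, FunOn κ g → ∃ δ < (succ κ).ord,
      IsStationaryIn {α | α < κ.ord ∧ g α < f δ α} κ.ord)
    {B : Set Ordinal} (hB : IsBig κ B) : ∃ A ∈ madFamily κ P E f, ¬ AlmostDisjoint κ A B := by
  by_contra! hAB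
  obtain ⟨δ, hδ, hδstat⟩ := hstat (succIn B) (funOn_succIn hreg hB)
  have hfree := exists_lt_notMem_madAvoid hreg hP hPbig fun γ hγ =>
    (madSeq_spec hreg hP hPbig hE hf (hγ.trans hδ)).2.1
  refine not_almostDisjoint_catchSet hfree hreg (hf δ hδ) hunc hB (fun j hj => ?_) hδstat ?_
  · exact almostDisjoint_madAvoid hreg.aleph0_le (hAB _ (Or.inl ⟨j, hj, rfl⟩)).symm
      fun γ hγ => (hAB _ (Or.inr ⟨γ, hγ.trans hδ, rfl⟩)).symm
  · rw [← madSeq_eq]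
    exact hAB _ (Or.inr ⟨δ, hδ, rfl⟩)

end Construction

/-- If there is a sequence `⟨f_δ : δ < κ⁺⟩` in `κ^κ` such that every
`g ∈ κ^κ` satisfies `{α < κ : g α < f_δ α}` stationary for some `δ`, then there is
a m.a.d. family in `[κ]^κ` of cardinality `κ⁺`, hence `𝔞(κ) = κ⁺`. -/
theorem stmt3 (κ : Cardinal.{0}) (hreg : κ.IsRegular) (hunc : ℵ₀ < κ)
    (f : Ordinal → Ordinal → Ordinal)
    (hf : ∀ δ < (Order.succ κ).ord, FunOn κ (f δ))
    (hstat : ∀ g, FunOn κ g → ∃ δ < (Order.succ κ).ord,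
      IsStationaryIn {α | α < κ.ord ∧ g α < f δ α} κ.ord) :
    (∃ 𝒜 : Set (Set Ordinal), MADFamily κ 𝒜 ∧ #𝒜 = Cardinal.lift.{1} (Order.succ κ)) ∧
      adNum κ = Cardinal.lift.{1} (Order.succ κ) := by
  obtain ⟨P, hP, hPbig⟩ := exists_pairwise_disjoint_isBig hreg.aleph0_le
  obtain ⟨E, hE⟩ := exists_forall_surjOn_Iio κ
  have hcard := mk_madFamily hreg hP hPbig hE hf
  have hMAD : MADFamily κ (madFamily κ P E f) :=
    ⟨adFamily_madFamily hreg hP hPbig hE hf, hcard ▸ Cardinal.lift_le.2 (le_succ κ),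
      fun _ hB => madFamily_maximal hreg hP hPbig hE hf hunc hstat hB⟩
  exact ⟨⟨_, hMAD, hcard⟩, adNum_eq_lift_succ hreg ⟨_, hMAD, hcard⟩⟩
end

section
/- Let κ be a regular uncountable cardinal, E₁ a club in κ, f ∈ κ^κ, and let E_f = {ξ ∈ E₁ : ξ is closed under f}. Suppose A ∈ [κ]^κ and δ < κ satisfy A \ δ ⊆ set(E_f, E₁). Define g_A(β) = s_A(s_{E₁}(β)) for β < κ. Then for all ζ with δ ≤ ζ < κ, f(ζ) < g_A(ζ). Hence f ≤* g_A. -/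
open Cardinal Set

/-! For `ζ ≥ δ` the ordinal `t = g_A(ζ)` lies in `A \ δ`, hence in a block `[ξ, s_{E₁}(ξ))`
with `ξ ∈ E₁` closed under `f`. A block contains no point of `E₁` beyond its start, while
`s_{E₁}(ζ) ∈ E₁` lies in `(ζ, t]`; so `ζ < ξ` and `f ζ < ξ ≤ t`. The exceptional set of
`f ≤* g_A` is therefore contained in `δ`, which has size `< κ`. -/

section succIn

variable {A : Set Ordinal} {α β : Ordinal}

theorem succIn_le (hβ : β ∈ A) (hαβ : α < β) : succIn A α ≤ β :=
  csInf_le (OrderBot.bddBelow _) ⟨hβ, hαβ⟩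

theorem succIn_mem_and_lt (h : ∃ β ∈ A, α < β) : succIn A α ∈ A ∧ α < succIn A α :=
  csInf_mem (s := {β | β ∈ A ∧ α < β}) h

end succIn

theorem IsClubIn.exists_gt {E : Set Ordinal} {o x : Ordinal} (hE : IsClubIn E o)
    (ho : Order.IsSuccLimit o) (hx : x < o) : ∃ e ∈ E, x < e := by
  obtain ⟨e, he, hxe⟩ := hE.2.1 (Order.succ x) (ho.succ_lt hx)
  exact ⟨e, he, (Order.lt_succ x).trans_le hxe⟩

theorem IsBig.exists_gt {κ : Cardinal.{0}} {A : Set Ordinal} (hA : IsBig κ A) (hκ : ℵ₀ ≤ κ)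
    {x : Ordinal} (hx : x < κ.ord) : ∃ a ∈ A, x < a := by
  by_contra! hle
  have hsub : A ⊆ Iio (Order.succ x) := fun a ha => Order.lt_succ_iff.2 (hle a ha)
  have hcard : #A ≤ Cardinal.lift.{1} (Order.succ x).card := by
    simpa only [mk_Iio_ordinal] using mk_le_mk_of_subset hsub
  rw [hA.2, lift_le] at hcard
  exact hcard.not_gt (lt_ord.1 ((isSuccLimit_ord hκ).succ_lt hx))

theorem lt_of_mem_blockSet {E : Set Ordinal} {ξ ζ s t : Ordinal} (ht : t ∈ blockSet E ξ)
    (hs : s ∈ E) (hζs : ζ < s) (hst : s ≤ t) : ζ < ξ := by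
  by_contra! hξζ
  exact (ht.2.trans_le (succIn_le hs (hξζ.trans_lt hζs))).not_ge hst

theorem apply_lt_of_mem_setSet {E : Set Ordinal} {f : Ordinal → Ordinal} {ζ s t : Ordinal}
    (ht : t ∈ setSet {ξ ∈ E | ∀ β < ξ, f β < ξ} E) (hs : s ∈ E) (hζs : ζ < s) (hst : s ≤ t) :
    f ζ < t := by
  simp only [setSet, mem_iUnion] at ht
  obtain ⟨ξ, ⟨-, hξf⟩, htξ⟩ := ht
  exact (hξf ζ (lt_of_mem_blockSet htξ hs hζs hst)).trans_le htξ.1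

theorem leStar_of_le_on_Ico {κ : Cardinal.{0}} {f g : Ordinal → Ordinal} {δ : Ordinal}
    (hδ : δ < κ.ord) (hle : ∀ ζ, δ ≤ ζ → ζ < κ.ord → f ζ ≤ g ζ) : LeStar κ f g := by
  have hsub : {α : Ordinal | α < κ.ord ∧ g α < f α} ⊆ Iio δ := fun α ⟨hα, hgf⟩ =>
    not_le.1 fun hδα => (hle α hδα hα).not_gt hgf
  calc #({α : Ordinal | α < κ.ord ∧ g α < f α} : Set Ordinal)
      ≤ #(Iio δ : Set Ordinal) := mk_le_mk_of_subset hsub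
    _ = Cardinal.lift.{1} δ.card := mk_Iio_ordinal δ
    _ < Cardinal.lift.{1} κ := lift_lt.2 (lt_ord.1 hδ)

theorem stmt13_general (κ : Cardinal.{0}) (hunc : ℵ₀ < κ)
    (E₁ : Set Ordinal) (hE₁ : IsClubIn E₁ κ.ord)
    (f : Ordinal → Ordinal)
    (A : Set Ordinal) (hA : IsBig κ A) (δ : Ordinal) (hδ : δ < κ.ord)
    (hsub : A \ Set.Iio δ ⊆ setSet {ξ ∈ E₁ | ∀ β < ξ, f β < ξ} E₁) :
    (∀ ζ, δ ≤ ζ → ζ < κ.ord → f ζ < succIn A (succIn E₁ ζ)) ∧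
      LeStar κ f (fun β => succIn A (succIn E₁ β)) := by
  have hlim : Order.IsSuccLimit κ.ord := isSuccLimit_ord hunc.le
  have hlt : ∀ ζ, δ ≤ ζ → ζ < κ.ord → f ζ < succIn A (succIn E₁ ζ) := by
    intro ζ hδζ hζ
    obtain ⟨hsE, hζs⟩ := succIn_mem_and_lt (hE₁.exists_gt hlim hζ)
    obtain ⟨htA, hst⟩ := succIn_mem_and_lt (hA.exists_gt hunc.le (hE₁.1 hsE))
    have htδ : succIn A (succIn E₁ ζ) ∈ A \ Iio δ :=
      ⟨htA, not_lt.2 (hδζ.trans (hζs.trans hst).le)⟩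
    exact apply_lt_of_mem_setSet (hsub htδ) hsE hζs hst.le
  exact ⟨hlt, leStar_of_le_on_Ico hδ fun ζ hδζ hζ => (hlt ζ hδζ hζ).le⟩

/-- Let `E₁` be a club in regular uncountable `κ`, `f ∈ κ^κ`,
`E_f = {ξ ∈ E₁ : ξ closed under f}`. If `A ∈ [κ]^κ` and `δ < κ` satisfy
`A \ δ ⊆ set(E_f, E₁)`, then `g_A(β) = s_A(s_{E₁}(β))` satisfies `f(ζ) < g_A(ζ)`
for all `δ ≤ ζ < κ`; hence `f ≤* g_A`. -/
theorem stmt13 (κ : Cardinal.{0}) (hreg : κ.IsRegular) (hunc : ℵ₀ < κ)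
    (E₁ : Set Ordinal) (hE₁ : IsClubIn E₁ κ.ord)
    (f : Ordinal → Ordinal) (hf : FunOn κ f)
    (A : Set Ordinal) (hA : IsBig κ A) (δ : Ordinal) (hδ : δ < κ.ord)
    (hsub : A \ Set.Iio δ ⊆ setSet {ξ ∈ E₁ | ∀ β < ξ, f β < ξ} E₁) :
    (∀ ζ, δ ≤ ζ → ζ < κ.ord → f ζ < succIn A (succIn E₁ ζ)) ∧
      LeStar κ f (fun β => succIn A (succIn E₁ β)) :=
  stmt13_general κ hunc E₁ hE₁ f A hA δ hδ hsub
end
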